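/- With notation as above and q = q₁^m a prime power, if t = t'·q₁^{m'} with gcd(t', q₁) = 1 and 1 ≤ m' < m, then det(zI - g^t)·det(zI - ḡ^t) = Ψ_{q₁^{m-m'}}(z)^{q₁^{m'}} = Ψ_{q₁}(z^{q₁^{m-m'-1}})^{q₁^{m'}}. -/

import Mathlib

open Finset

/-! The eigenvalues of `g ^ t` and `ḡ ^ t` are `e(± t rⱼ / q)` and `e(± t sⱼ / q)`, where
`e(x / N) = ZMod.stdAddChar x`. As `± rⱼ, ± sⱼ` run once through `(ℤ/q)ˣ`, the product of the
two determinants is `∏_{u ∈ (ℤ/q)ˣ} (z - e(t u / q))`. With `d = q₁ ^ (m - m')` we have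
`e(t u / q) = e(t' ū / d)`, `ū` the reduction of `u` mod `d`; reduction `(ℤ/q)ˣ → (ℤ/d)ˣ` is onto
with fibres of size `φ(q) / φ(d) = q₁ ^ m'`, and `ū ↦ e(t' ū / d)` is a bijection onto the
primitive `d`-th roots of unity. -/

/-- The 2×2 rotation matrix by angle `2πν`, viewed over `ℂ`. -/
noncomputable def Rot (ν : ℝ) : Matrix (Fin 2) (Fin 2) ℂ :=
  !![(Real.cos (2 * Real.pi * ν) : ℂ), (Real.sin (2 * Real.pi * ν) : ℂ);
     (-Real.sin (2 * Real.pi * ν) : ℂ), (Real.cos (2 * Real.pi * ν) : ℂ)]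

/-- The block-diagonal matrix with rotation blocks `Rot (v j / q)`. -/
noncomputable def blockRot {n : ℕ} (q : ℕ) (v : Fin n → ℤ) :
    Matrix (Fin 2 × Fin n) (Fin 2 × Fin n) ℂ :=
  Matrix.blockDiagonal (fun j => Rot ((v j : ℝ) / q))

theorem Rot_add (a b : ℝ) : Rot (a + b) = Rot a * Rot b := by
  simp only [Rot, Matrix.mul_fin_two, mul_add, Real.cos_add, Real.sin_add]
  push_cast
  ring_nf

theorem Rot_zero : Rot 0 = 1 := by
  simp [Rot, Matrix.one_fin_two]

theorem Rot_pow (ν : ℝ) (t : ℕ) : Rot ν ^ t = Rot (t * ν) := by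
  induction t with
  | zero => simp [Rot_zero]
  | succ t ih => rw [pow_succ, ih, ← Rot_add]; push_cast; ring_nf

theorem det_smul_one_sub_Rot (z : ℂ) (ν : ℝ) :
    (z • (1 : Matrix (Fin 2) (Fin 2) ℂ) - Rot ν).det
      = (z - Complex.exp (2 * Real.pi * Complex.I * ν))
        * (z - Complex.exp (-(2 * Real.pi * Complex.I * ν))) := by
  have h : 2 * Real.pi * Complex.I * ν = ((2 * Real.pi * ν : ℝ) : ℂ) * Complex.I := by
    push_cast; ring
  rw [h, ← neg_mul, ← Complex.ofReal_neg, Complex.exp_mul_I, Complex.exp_mul_I]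
  simp only [Rot, Matrix.det_fin_two, Matrix.sub_apply, Matrix.smul_apply, Matrix.one_apply,
    Matrix.of_apply, Matrix.cons_val', Matrix.cons_val_zero, Matrix.cons_val_one,
    Matrix.empty_val', Matrix.cons_val_fin_one, ← Complex.ofReal_cos, ← Complex.ofReal_sin,
    Real.cos_neg, Real.sin_neg]
  norm_num
  linear_combination Complex.sin (2 * Real.pi * ν) ^ 2 * Complex.I_sq

theorem det_smul_one_sub_blockRot_pow {n : ℕ} (q : ℕ) [NeZero q] (v : Fin n → ℤ) (t : ℕ)
    (z : ℂ) :
    (z • (1 : Matrix (Fin 2 × Fin n) (Fin 2 × Fin n) ℂ) - blockRot q v ^ t).det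
      = ∏ j, (z - ZMod.stdAddChar ((t : ZMod q) * (v j : ZMod q)))
          * (z - ZMod.stdAddChar ((t : ZMod q) * -(v j : ZMod q))) := by
  have hpow : blockRot q v ^ t = Matrix.blockDiagonal fun j => Rot (t * (v j / q)) := by
    rw [blockRot, ← Matrix.blockDiagonal_pow]
    exact congrArg _ (funext fun j => Rot_pow _ t)
  have hsmul : z • (1 : Matrix (Fin 2 × Fin n) (Fin 2 × Fin n) ℂ)
      = Matrix.blockDiagonal fun _ => z • 1 := by
    rw [← Matrix.blockDiagonal_one, ← Matrix.blockDiagonal_smul]; rfl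
  rw [hpow, hsmul, ← Matrix.blockDiagonal_sub, Matrix.det_blockDiagonal]
  refine Fintype.prod_congr _ _ fun j => ?_
  have hpos : (t : ZMod q) * (v j : ZMod q) = ((t * v j : ℤ) : ZMod q) := by push_cast; rfl
  have hneg : (t : ZMod q) * -(v j : ZMod q) = ((-(t * v j) : ℤ) : ZMod q) := by push_cast; ring
  rw [Pi.sub_apply, det_smul_one_sub_Rot, hpos, hneg, ZMod.stdAddChar_coe, ZMod.stdAddChar_coe]
  push_cast
  ring_nf

theorem det_mul_det_smul_one_sub_blockRot_pow {n k : ℕ} (q : ℕ) [NeZero q] (r : Fin n → ℤ)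
    (s : Fin k → ℤ) (t : ℕ) (z : ℂ) :
    (z • (1 : Matrix (Fin 2 × Fin n) (Fin 2 × Fin n) ℂ) - blockRot q r ^ t).det
      * (z • (1 : Matrix (Fin 2 × Fin k) (Fin 2 × Fin k) ℂ) - blockRot q s ^ t).det
      = ∏ p : (Fin n ⊕ Fin k) × Bool, (z - ZMod.stdAddChar ((t : ZMod q) *
          if p.2 then ((Sum.elim r s p.1 : ℤ) : ZMod q)
          else -((Sum.elim r s p.1 : ℤ) : ZMod q))) := by
  rw [det_smul_one_sub_blockRot_pow, det_smul_one_sub_blockRot_pow, Fintype.prod_prod_type,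
    Fintype.prod_sum_type]
  simp

theorem IsPrimitiveRoot.prod_units_pow_val {K M : Type*} [CommRing K] [IsDomain K]
    [CommMonoid M] {ζ : K} {d : ℕ} [NeZero d] (hζ : IsPrimitiveRoot ζ d) (f : K → M) :
    ∏ y : (ZMod d)ˣ, f (ζ ^ (y : ZMod d).val) = ∏ η ∈ primitiveRoots d K, f η := by
  have hd : 0 < d := Nat.pos_of_neZero d
  refine Finset.prod_nbij (fun y => ζ ^ (y : ZMod d).val) ?_ ?_ ?_ fun _ _ => rfl
  · intro y _
    rw [mem_primitiveRoots hd]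
    exact hζ.pow_of_coprime _ (ZMod.val_coe_unit_coprime y)
  · intro a _ b _ hab
    exact Units.ext (ZMod.val_injective d (hζ.pow_inj (ZMod.val_lt _) (ZMod.val_lt _) hab))
  · intro η hη
    obtain ⟨i, hi, hcop, rfl⟩ := hζ.isPrimitiveRoot_iff.mp ((mem_primitiveRoots hd).mp hη)
    exact ⟨ZMod.unitOfCoprime i hcop, mem_coe.mpr (mem_univ _), by
      simp [ZMod.val_natCast_of_lt hi]⟩

theorem ZMod.stdAddChar_eq_pow_val {N : ℕ} [NeZero N] (x : ZMod N) :
    ZMod.stdAddChar x = ZMod.stdAddChar (1 : ZMod N) ^ x.val := by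
  rw [← AddChar.map_nsmul_eq_pow, nsmul_one, ZMod.natCast_zmod_val]

theorem ZMod.isPrimitiveRoot_stdAddChar_one (N : ℕ) [NeZero N] :
    IsPrimitiveRoot (ZMod.stdAddChar (1 : ZMod N)) N := by
  rw [← Int.cast_one, ZMod.stdAddChar_coe, Int.cast_one, mul_one]
  exact Complex.isPrimitiveRoot_exp N (NeZero.ne N)

theorem ZMod.prod_units_stdAddChar {M : Type*} [CommMonoid M] {d : ℕ} [NeZero d]
    (f : ℂ → M) :
    ∏ y : (ZMod d)ˣ, f (ZMod.stdAddChar (y : ZMod d)) = ∏ η ∈ primitiveRoots d ℂ, f η := by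
  rw [← (ZMod.isPrimitiveRoot_stdAddChar_one d).prod_units_pow_val f]
  exact Fintype.prod_congr _ _ fun y => by rw [ZMod.stdAddChar_eq_pow_val]

theorem ZMod.stdAddChar_mul_div {N d : ℕ} [NeZero N] [NeZero d] (h : d ∣ N) (x : ZMod N) :
    ZMod.stdAddChar (((N / d : ℕ) : ZMod N) * x)
      = ZMod.stdAddChar (ZMod.castHom h (ZMod d) x) := by
  obtain ⟨j, rfl⟩ := ZMod.intCast_surjective x
  obtain ⟨c, rfl⟩ := h
  have hd : (d : ℂ) ≠ 0 := Nat.cast_ne_zero.mpr (NeZero.ne d)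
  have hc : (c : ℂ) ≠ 0 := Nat.cast_ne_zero.mpr (right_ne_zero_of_mul (NeZero.ne (d * c)))
  rw [map_intCast, ← Int.cast_natCast, ← Int.cast_mul, ZMod.stdAddChar_coe, ZMod.stdAddChar_coe,
    Nat.mul_div_cancel_left c (NeZero.pos d)]
  congr 1
  push_cast
  field_simp

theorem Fintype.prod_comp_eq_prod_units {κ R M : Type*} [Fintype κ] [Monoid R] [Fintype Rˣ]
    [CommMonoid M] {g : κ → R} (hg : Function.Injective g)
    (hrange : Set.range g = {x | IsUnit x}) (f : R → M) :
    ∏ p, f (g p) = ∏ u : Rˣ, f u := by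
  have hunit (p : κ) : IsUnit (g p) := hrange.le (Set.mem_range_self p)
  refine Fintype.prod_bijective (fun p => (hunit p).unit) ⟨fun p p' h => hg ?_, fun u => ?_⟩
    _ _ fun _ => rfl
  · simpa using congrArg Units.val h
  · obtain ⟨p, hp⟩ : (u : R) ∈ Set.range g := hrange.ge u.isUnit
    exact ⟨p, Units.ext hp⟩

theorem MonoidHom.prod_comp_of_surjective {G H M : Type*} [Group G] [Group H] [Fintype G]
    [Fintype H] [DecidableEq H] [CommMonoid M] {π : G →* H} (hπ : Function.Surjective π)
    (f : H → M) : ∏ x, f (π x) = (∏ y, f y) ^ Nat.card π.ker := by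
  rw [← Finset.prod_fiberwise' univ π f, ← Finset.prod_pow]
  refine Fintype.prod_congr _ _ fun y => ?_
  rw [Finset.prod_const, ← Nat.card_congr (π.fiberEquivKerOfSurjective hπ y),
    ← Nat.card_eq_finsetCard]
  congr 1
  exact Nat.card_congr (Equiv.subtypeEquivRight fun x => by simp)

theorem MonoidHom.card_ker_mul_card_of_surjective {G H : Type*} [Group G] [Group H]
    {π : G →* H} (hπ : Function.Surjective π) : Nat.card π.ker * Nat.card H = Nat.card G := by
  rw [← Subgroup.card_mul_index π.ker, Subgroup.index_ker, π.range_eq_top.mpr hπ,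
    Subgroup.card_top]

theorem ZMod.card_ker_unitsMap_prime_pow {p a b : ℕ} (hp : p.Prime) (ha : 0 < a) (hab : a ≤ b)
    (h : p ^ a ∣ p ^ b) : Nat.card (ZMod.unitsMap h).ker = p ^ (b - a) := by
  have : NeZero (p ^ a) := ⟨pow_ne_zero _ hp.ne_zero⟩
  have : NeZero (p ^ b) := ⟨pow_ne_zero _ hp.ne_zero⟩
  have hcard := MonoidHom.card_ker_mul_card_of_surjective (ZMod.unitsMap_surjective h)
  rw [Nat.card_eq_fintype_card (α := (ZMod _)ˣ), Nat.card_eq_fintype_card (α := (ZMod _)ˣ),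
    ZMod.card_units_eq_totient, ZMod.card_units_eq_totient, Nat.totient_prime_pow hp ha,
    Nat.totient_prime_pow hp (ha.trans_le hab),
    show b - 1 = (b - a) + (a - 1) by omega, pow_add, mul_assoc] at hcard
  exact Nat.eq_of_mul_eq_mul_right (Nat.mul_pos (pow_pos hp.pos _) (Nat.sub_pos_of_lt hp.one_lt))
    hcard

theorem prod_units_stdAddChar_div_mul {M : Type*} [CommMonoid M] {N d : ℕ} [NeZero N]
    [NeZero d] (h : d ∣ N) {a : ℕ} (ha : a.Coprime d) (f : ℂ → M) :
    ∏ u : (ZMod N)ˣ, f (ZMod.stdAddChar (((N / d * a : ℕ) : ZMod N) * (u : ZMod N)))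
      = (∏ η ∈ primitiveRoots d ℂ, f η) ^ Nat.card (ZMod.unitsMap h).ker := by
  have hreduce (u : (ZMod N)ˣ) : ZMod.stdAddChar (((N / d * a : ℕ) : ZMod N) * (u : ZMod N))
      = ZMod.stdAddChar ((a : ZMod d) * (ZMod.unitsMap h u : ZMod d)) := by
    rw [Nat.cast_mul, mul_assoc, ZMod.stdAddChar_mul_div h, map_mul, map_natCast,
      ZMod.unitsMap_val, ZMod.castHom_apply]
  have ha_unit : (ZMod.unitOfCoprime a ha : ZMod d) = a := ZMod.coe_unitOfCoprime a ha
  rw [Fintype.prod_congr _ _ fun u => congrArg f (hreduce u),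
    MonoidHom.prod_comp_of_surjective (ZMod.unitsMap_surjective h)
      (fun y => f (ZMod.stdAddChar ((a : ZMod d) * (y : ZMod d)))),
    Fintype.prod_equiv (Equiv.mulLeft (ZMod.unitOfCoprime a ha)) _
      (fun y => f (ZMod.stdAddChar (y : ZMod d))) fun y => by
        rw [Equiv.coe_mulLeft, Units.val_mul, ha_unit],
    ZMod.prod_units_stdAddChar]

theorem prod_primitiveRoots_prime_pow_succ {K : Type*} [CommRing K] [IsDomain K] {p e : ℕ}
    (hp : p.Prime) {ζ : K} (hζ : IsPrimitiveRoot ζ (p ^ (e + 1))) (z : K) :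
    ∏ η ∈ primitiveRoots (p ^ (e + 1)) K, (z - η)
      = ∏ η ∈ primitiveRoots p K, (z ^ p ^ e - η) := by
  have : Fact p.Prime := ⟨hp⟩
  have hζp : IsPrimitiveRoot (ζ ^ p ^ e) p := hζ.pow (pow_pos hp.pos _) (pow_succ p e)
  have h1 := congrArg (Polynomial.eval z) (Polynomial.cyclotomic_eq_prod_X_sub_primitiveRoots hζ)
  have h2 := congrArg (Polynomial.eval (z ^ p ^ e))
    (Polynomial.cyclotomic_eq_prod_X_sub_primitiveRoots hζp)
  simp only [Polynomial.eval_prod, Polynomial.eval_sub, Polynomial.eval_X, Polynomial.eval_C]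
    at h1 h2
  rw [← h1, ← h2, Polynomial.cyclotomic_prime_pow_eq_geom_sum hp, Polynomial.cyclotomic_prime]
  simp [Polynomial.eval_finsetSum]

theorem det_mul_det_eq_cyclotomic_prime_pow_general (q₁ m : ℕ) (hq₁ : Nat.Prime q₁)
    (q : ℕ) (hq : q = q₁ ^ m) (n k : ℕ)
    (r : Fin n → ℤ) (s : Fin k → ℤ)
    (hinj : Function.Injective (fun p : (Fin n ⊕ Fin k) × Bool =>
      (if p.2 then ((Sum.elim r s p.1 : ℤ) : ZMod q)
        else -((Sum.elim r s p.1 : ℤ) : ZMod q))))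
    (hrange : Set.range (fun p : (Fin n ⊕ Fin k) × Bool =>
      (if p.2 then ((Sum.elim r s p.1 : ℤ) : ZMod q)
        else -((Sum.elim r s p.1 : ℤ) : ZMod q))) = {x : ZMod q | IsUnit x})
    (t t' m' : ℕ) (ht : t = t' * q₁ ^ m') (ht' : Nat.Coprime t' q₁)
    (hm'2 : m' < m) (z : ℂ) :
    ((z • (1 : Matrix (Fin 2 × Fin n) (Fin 2 × Fin n) ℂ)
        - (blockRot q r) ^ t).det)
      * ((z • (1 : Matrix (Fin 2 × Fin k) (Fin 2 × Fin k) ℂ)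
        - (blockRot q s) ^ t).det)
      = (∏ η ∈ primitiveRoots (q₁ ^ (m - m')) ℂ, (z - η)) ^ (q₁ ^ m')
    ∧ (∏ η ∈ primitiveRoots (q₁ ^ (m - m')) ℂ, (z - η)) ^ (q₁ ^ m')
      = (∏ η ∈ primitiveRoots q₁ ℂ, (z ^ (q₁ ^ (m - m' - 1)) - η)) ^ (q₁ ^ m') := by
  subst hq
  have : NeZero (q₁ ^ m) := ⟨pow_ne_zero _ hq₁.ne_zero⟩
  have : NeZero (q₁ ^ (m - m')) := ⟨pow_ne_zero _ hq₁.ne_zero⟩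
  have hdvd : q₁ ^ (m - m') ∣ q₁ ^ m := pow_dvd_pow _ (Nat.sub_le m m')
  have ht_eq : t = q₁ ^ m / q₁ ^ (m - m') * t' := by
    rw [Nat.pow_div (Nat.sub_le m m') hq₁.pos, Nat.sub_sub_self hm'2.le, ht, mul_comm]
  refine ⟨?_, ?_⟩
  · rw [det_mul_det_smul_one_sub_blockRot_pow, Fintype.prod_comp_eq_prod_units hinj hrange
      (fun x => z - ZMod.stdAddChar ((t : ZMod (q₁ ^ m)) * x)), ht_eq,
      prod_units_stdAddChar_div_mul hdvd (ht'.pow_right (m - m')),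
      ZMod.card_ker_unitsMap_prime_pow hq₁ (by omega) (Nat.sub_le m m'), Nat.sub_sub_self hm'2.le]
  · obtain ⟨e, he⟩ : ∃ e, m - m' = e + 1 := ⟨m - m' - 1, by omega⟩
    rw [he, prod_primitiveRoots_prime_pow_succ hq₁
      (Complex.isPrimitiveRoot_exp _ (pow_ne_zero _ hq₁.ne_zero)), Nat.add_sub_cancel]

theorem det_mul_det_eq_cyclotomic_prime_pow (q₁ m : ℕ) (hq₁ : Nat.Prime q₁)
    (hm : 2 ≤ m) (q : ℕ) (hq : q = q₁ ^ m) (n k : ℕ)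
    (r : Fin n → ℤ) (s : Fin k → ℤ)
    (hinj : Function.Injective (fun p : (Fin n ⊕ Fin k) × Bool =>
      (if p.2 then ((Sum.elim r s p.1 : ℤ) : ZMod q)
        else -((Sum.elim r s p.1 : ℤ) : ZMod q))))
    (hrange : Set.range (fun p : (Fin n ⊕ Fin k) × Bool =>
      (if p.2 then ((Sum.elim r s p.1 : ℤ) : ZMod q)
        else -((Sum.elim r s p.1 : ℤ) : ZMod q))) = {x : ZMod q | IsUnit x})
    (t t' m' : ℕ) (ht : t = t' * q₁ ^ m') (ht' : Nat.Coprime t' q₁)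
    (hm'1 : 1 ≤ m') (hm'2 : m' < m) (z : ℂ) :
    ((z • (1 : Matrix (Fin 2 × Fin n) (Fin 2 × Fin n) ℂ)
        - (blockRot q r) ^ t).det)
      * ((z • (1 : Matrix (Fin 2 × Fin k) (Fin 2 × Fin k) ℂ)
        - (blockRot q s) ^ t).det)
      = (∏ η ∈ primitiveRoots (q₁ ^ (m - m')) ℂ, (z - η)) ^ (q₁ ^ m')
    ∧ (∏ η ∈ primitiveRoots (q₁ ^ (m - m')) ℂ, (z - η)) ^ (q₁ ^ m')
      = (∏ η ∈ primitiveRoots q₁ ℂ, (z ^ (q₁ ^ (m - m' - 1)) - η)) ^ (q₁ ^ m') :=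
  det_mul_det_eq_cyclotomic_prime_pow_general q₁ m hq₁ q hq n k r s hinj hrange t t' m' ht ht' hm'2
    z
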